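/- arXiv:1104.3507 — 6 statements merged into one kernel-verified Lean document; each statement's English description precedes it below -/
import Mathlib

section
/- Let n ≥ 1 and let A, B be maximal abelian self-adjoint subalgebras (masas) of the algebra M_n(ℂ) of n×n complex matrices, i.e., commutative *-subalgebras each equal to its own centralizer in M_n(ℂ). If A and B are orthogonal with respect to the normalized trace, meaning tr_n(ab) = tr_n(a)·tr_n(b) for all a ∈ A and b ∈ B, then the linear span of {ab : a ∈ A, b ∈ B} is all of M_n(ℂ). -/
open scoped Matrix

/-- The normalized trace on `n × n` complex matrices. -/
noncomputable def normTrace (n : ℕ) (M : Matrix (Fin n) (Fin n) ℂ) : ℂ :=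
  (n : ℂ)⁻¹ * Matrix.trace M

/-!
A masa `A` of `M_n(ℂ)` is commutative, so by the spectral theorem applied to its Hermitian
elements it is diagonal in a common eigenbasis `b`; being its own centralizer, it then contains
every matrix that is diagonal in `b`, in particular `n` orthogonal idempotents `p i` of trace one.
Let `q j` be such idempotents in `B`. Orthogonality gives `tr (p i * q j) = 1 / n ≠ 0`, and
multiplying a relation `∑ g i j • p i * q j = 0` by `p k` on the left and by `q l` on the right
leaves `g k l • p k * q l = 0`. So the `n²` products `p i * q j` are linearly independent, hence
span `M_n(ℂ)`.
-/

open Matrix Module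

namespace Module.Basis

variable {K m ι : Type*} [Field K] [Fintype m] [DecidableEq m] [Fintype ι] [DecidableEq ι]

/-- `b.diagonalAlgHom c` is the matrix, in the standard basis, of the map `b i ↦ c i • b i`. -/
noncomputable def diagonalAlgHom (b : Basis ι K (m → K)) : (ι → K) →ₐ[K] Matrix m m K :=
  ((Matrix.toLinAlgEquiv b).trans LinearMap.toMatrixAlgEquiv').toAlgHom.comp
    (Matrix.diagonalAlgHom K)

variable (b : Basis ι K (m → K))

lemma toLin'_diagonalAlgHom (c : ι → K) :
    toLin' (b.diagonalAlgHom c) = toLin b b (diagonal c) :=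
  Matrix.toLin'_toMatrix' (toLin b b (diagonal c))

lemma diagonalAlgHom_mulVec (c : ι → K) (i : ι) : b.diagonalAlgHom c *ᵥ b i = c i • b i := by
  rw [← Matrix.toLin'_apply, toLin'_diagonalAlgHom, Matrix.toLin_self]
  simp [diagonal_apply]

lemma eq_diagonalAlgHom_of_mulVec {a : Matrix m m K} {c : ι → K}
    (ha : ∀ i, a *ᵥ b i = c i • b i) : a = b.diagonalAlgHom c := by
  apply Matrix.toLin'.injective
  refine b.ext fun i => ?_
  rw [Matrix.toLin'_apply, ha, Matrix.toLin'_apply, diagonalAlgHom_mulVec]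

lemma trace_diagonalAlgHom (c : ι → K) : (b.diagonalAlgHom c).trace = ∑ i, c i := by
  rw [← Matrix.trace_toLin'_eq, toLin'_diagonalAlgHom, Matrix.trace_toLin_eq, trace_diagonal]

end Module.Basis

theorem exists_simultaneous_eigenbasis_of_isSymmetric {𝕜 E : Type*} [RCLike 𝕜]
    [NormedAddCommGroup E] [InnerProductSpace 𝕜 E] [FiniteDimensional 𝕜 E]
    {S : Set (E →ₗ[𝕜] E)} (hS : ∀ T ∈ S, T.IsSymmetric) (hC : S.Pairwise Commute) :
    ∃ b : Basis (Fin (finrank 𝕜 E)) 𝕜 E, ∀ T ∈ S, ∀ i, ∃ c : 𝕜, T (b i) = c • b i := by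
  classical
  let V (χ : S → 𝕜) := ⨅ T : S, Module.End.eigenspace (T : E →ₗ[𝕜] E) (χ T)
  have hV : DirectSum.IsInternal V :=
    LinearMap.IsSymmetric.directSum_isInternal_of_pairwise_commute
      (T := fun T : S => (T : E →ₗ[𝕜] E)) (fun T => hS T T.2)
      fun T T' hTT' => hC T.2 T'.2 (Subtype.coe_ne_coe.mpr hTT')
  let b := hV.collectedBasis fun χ => finBasis 𝕜 (V χ)
  have hb (s) (T : S) : (T : E →ₗ[𝕜] E) (b s) = s.1 T • b s :=
    Module.End.mem_eigenspace_iff.mp ((Submodule.mem_iInf _).mp (hV.collectedBasis_mem _ s) T)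
  have := FiniteDimensional.fintypeBasisIndex b
  let e := Fintype.equivFinOfCardEq (finrank_eq_card_basis b).symm
  refine ⟨b.reindex e, fun T hT i => ⟨(e.symm i).1 ⟨T, hT⟩, ?_⟩⟩
  rw [Basis.reindex_apply]
  exact hb _ ⟨T, hT⟩

namespace StarSubalgebra

open ComplexStarModule

variable {E : Type*} [Ring E] [StarRing E] [Algebra ℂ E] [StarModule ℂ E] (S : StarSubalgebra ℂ E)

lemma realPart_mem {a : E} (ha : a ∈ S) : (ℜ a : E) ∈ S := by
  rw [realPart_apply_coe, ← Complex.coe_smul]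
  exact SMulMemClass.smul_mem _ (add_mem ha (star_mem ha))

lemma imaginaryPart_mem {a : E} (ha : a ∈ S) : (ℑ a : E) ∈ S := by
  rw [imaginaryPart_apply_coe, ← Complex.coe_smul]
  exact SMulMemClass.smul_mem _ (SMulMemClass.smul_mem _ (sub_mem ha (star_mem ha)))

variable {m : Type*} [Fintype m] [DecidableEq m]

theorem exists_basis_forall_mem_eq_diagonalAlgHom (A : StarSubalgebra ℂ (Matrix m m ℂ))
    (hA : ∀ a ∈ A, ∀ a' ∈ A, Commute a a') :
    ∃ b : Basis m ℂ (m → ℂ), ∀ a ∈ A, ∃ c, a = b.diagonalAlgHom c := by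
  obtain ⟨b₀, hb₀⟩ := exists_simultaneous_eigenbasis_of_isSymmetric
    (S := toEuclideanLin '' {a | a ∈ A ∧ a.IsHermitian})
    (by rintro _ ⟨a, ⟨-, ha⟩, rfl⟩; exact isSymmetric_toEuclideanLin_iff.mpr ha)
    (by
      rintro _ ⟨a, ⟨ha, -⟩, rfl⟩ _ ⟨a', ⟨ha', -⟩, rfl⟩ -
      simp only [Commute, SemiconjBy, Module.End.mul_eq_comp, ← toLpLin_mul_same,
        (hA a ha a' ha').eq])
  let e : Fin (finrank ℂ (EuclideanSpace ℂ m)) ≃ m := Fintype.equivOfCardEq (by simp)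
  let b := (b₀.map (WithLp.linearEquiv 2 ℂ (m → ℂ))).reindex e
  have hherm : ∀ a ∈ A, a.IsHermitian → ∀ i, ∃ c : ℂ, a *ᵥ b i = c • b i := by
    intro a ha hh i
    obtain ⟨c, hc⟩ := hb₀ _ ⟨a, ⟨ha, hh⟩, rfl⟩ (e.symm i)
    exact ⟨c, by simpa [b] using congrArg WithLp.ofLp hc⟩
  have heig : ∀ a ∈ A, ∀ i, ∃ c : ℂ, a *ᵥ b i = c • b i := by
    intro a ha i
    obtain ⟨c₁, hc₁⟩ := hherm _ (A.realPart_mem ha) (ℜ a).2 i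
    obtain ⟨c₂, hc₂⟩ := hherm _ (A.imaginaryPart_mem ha) (ℑ a).2 i
    refine ⟨c₁ + Complex.I * c₂, ?_⟩
    rw [← realPart_add_I_smul_imaginaryPart a, add_mulVec, smul_mulVec, hc₁, hc₂, smul_smul,
      add_smul]
  refine ⟨b, fun a ha => ?_⟩
  choose c hc using heig a ha
  exact ⟨c, b.eq_diagonalAlgHom_of_mulVec hc⟩

end StarSubalgebra

theorem exists_orthogonalIdempotents_of_centralizer_eq {m : Type*} [Fintype m] [DecidableEq m]
    (A : StarSubalgebra ℂ (Matrix m m ℂ))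
    (hA : (A : Set (Matrix m m ℂ)) = Set.centralizer A) :
    ∃ p : m → Matrix m m ℂ, OrthogonalIdempotents p ∧ (∀ i, p i ∈ A) ∧ ∀ i, (p i).trace = 1 := by
  have hcomm : ∀ a ∈ A, ∀ a' ∈ A, Commute a a' := fun a ha a' ha' =>
    Set.mem_centralizer_iff.mp (hA ▸ ha' : a' ∈ Set.centralizer (A : Set _)) a ha
  obtain ⟨b, hb⟩ := A.exists_basis_forall_mem_eq_diagonalAlgHom hcomm
  refine ⟨b.diagonalAlgHom ∘ (Pi.single · 1),
    (CompleteOrthogonalIdempotents.single fun _ : m => ℂ).1.map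
      (b.diagonalAlgHom : (m → ℂ) →+* Matrix m m ℂ),
    fun i => ?_, fun i => by simp [b.trace_diagonalAlgHom]⟩
  change _ ∈ (A : Set (Matrix m m ℂ))
  rw [hA, Set.mem_centralizer_iff]
  intro a ha
  obtain ⟨c, rfl⟩ := hb a ha
  exact ((Commute.all c (Pi.single i 1)).map b.diagonalAlgHom).eq

theorem OrthogonalIdempotents.linearIndependent_mul {K R ι κ : Type*} [CommRing K]
    [NoZeroDivisors K] [Ring R] [Algebra K R] {p : ι → R} {q : κ → R}
    (hp : OrthogonalIdempotents p) (hq : OrthogonalIdempotents q) (τ : R →ₗ[K] K)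
    (hτ : ∀ i j, τ (p i * q j) ≠ 0) :
    LinearIndependent K fun x : ι × κ => p x.1 * q x.2 := by
  classical
  rw [linearIndependent_iff']
  rintro s g hg ⟨k, l⟩ hkl
  have hterm (x : ι × κ) : p k * (g x • (p x.1 * q x.2)) * q l =
      if x = (k, l) then g x • (p k * q l) else 0 := by
    rw [mul_smul_comm, smul_mul_assoc, ← mul_assoc, mul_assoc _ _ (q l), hp.mul_eq, hq.mul_eq]
    obtain ⟨i, j⟩ := x
    rcases eq_or_ne k i with rfl | hi <;> rcases eq_or_ne j l with rfl | hj <;>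
      simp [*, Ne.symm]
  have hsum : p k * (∑ x ∈ s, g x • (p x.1 * q x.2)) * q l = g (k, l) • (p k * q l) := by
    rw [Finset.mul_sum, Finset.sum_mul, Finset.sum_congr rfl fun x _ => hterm x,
      Finset.sum_ite_eq' s, if_pos hkl]
  rw [hg, mul_zero, zero_mul] at hsum
  have := congrArg τ hsum
  rw [map_zero, map_smul, smul_eq_mul] at this
  exact (mul_eq_zero.mp this.symm).resolve_right (hτ k l)

theorem masa_orthogonal_span_general (n : ℕ)
    (A B : StarSubalgebra ℂ (Matrix (Fin n) (Fin n) ℂ))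
    (hA_masa : (A : Set (Matrix (Fin n) (Fin n) ℂ)) =
      Set.centralizer (A : Set (Matrix (Fin n) (Fin n) ℂ)))
    (hB_masa : (B : Set (Matrix (Fin n) (Fin n) ℂ)) =
      Set.centralizer (B : Set (Matrix (Fin n) (Fin n) ℂ)))
    (horth : ∀ a ∈ A, ∀ b ∈ B, normTrace n (a * b) = normTrace n a * normTrace n b) :
    Submodule.span ℂ {x : Matrix (Fin n) (Fin n) ℂ | ∃ a ∈ A, ∃ b ∈ B, x = a * b} = ⊤ := by
  obtain ⟨p, hp, hpA, hp_tr⟩ := exists_orthogonalIdempotents_of_centralizer_eq A hA_masa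
  obtain ⟨q, hq, hqB, hq_tr⟩ := exists_orthogonalIdempotents_of_centralizer_eq B hB_masa
  have htr (i j : Fin n) : (p i * q j).trace ≠ 0 := by
    have hn : (n : ℂ) ≠ 0 := Nat.cast_ne_zero.mpr i.pos.ne'
    intro h
    have := horth _ (hpA i) _ (hqB j)
    simp [normTrace, hp_tr, hq_tr, h, hn] at this
  have hspan := (hp.linearIndependent_mul hq (Matrix.traceLinearMap _ ℂ ℂ) htr)
    |>.span_eq_top_of_card_eq_finrank' (by simp [Module.finrank_matrix])
  rw [eq_top_iff, ← hspan]
  exact Submodule.span_mono (by rintro _ ⟨⟨i, j⟩, rfl⟩; exact ⟨p i, hpA i, q j, hqB j, rfl⟩)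

/-- If `A`, `B` are masas of `M_n(ℂ)` (commutative star-subalgebras equal to their own
centralizers) that are orthogonal with respect to the normalized trace, then the linear
span of products `a * b`, `a ∈ A`, `b ∈ B`, is all of `M_n(ℂ)`. -/
theorem masa_orthogonal_span (n : ℕ) (hn : 1 ≤ n)
    (A B : StarSubalgebra ℂ (Matrix (Fin n) (Fin n) ℂ))
    (hA_comm : ∀ a ∈ A, ∀ a' ∈ A, a * a' = a' * a)
    (hB_comm : ∀ b ∈ B, ∀ b' ∈ B, b * b' = b' * b)
    (hA_masa : (A : Set (Matrix (Fin n) (Fin n) ℂ)) =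
      Set.centralizer (A : Set (Matrix (Fin n) (Fin n) ℂ)))
    (hB_masa : (B : Set (Matrix (Fin n) (Fin n) ℂ)) =
      Set.centralizer (B : Set (Matrix (Fin n) (Fin n) ℂ)))
    (horth : ∀ a ∈ A, ∀ b ∈ B, normTrace n (a * b) = normTrace n a * normTrace n b) :
    Submodule.span ℂ {x : Matrix (Fin n) (Fin n) ℂ | ∃ a ∈ A, ∃ b ∈ B, x = a * b} = ⊤ :=
  masa_orthogonal_span_general n A B hA_masa hB_masa horth
end

section
/- Let ν be a finite Borel measure on [0,1] whose Lebesgue decomposition with respect to Lebesgue measure λ has a nonzero singular part. Then for every C > 0 there exists a sequence (f_k)_{k∈ℕ} of continuous complex-valued functions on [0,1], orthonormal in L²([0,1],λ), such that ∑_{k} |∫₀¹ f_k dν|² > C. In other words, the supremum over all such orthonormal sequences of ∑_k |∫ f_k dν|² is infinite. -/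
/-!
The singular part `μ` of `ν` lives on a Lebesgue-null set. Inner regularity of `μ`, outer
regularity of `λ` and Urysohn's lemma therefore give a continuous `0 ≤ g ≤ 1` with
`∫ g dν ≥ ∫ g dμ > r` for a fixed `r > 0`, but with `∫ g² dλ` as small as we like. The
normalised `u = g / ‖g‖₂` then has `|∫ u dν|² > r² / ∫ g² dλ`, which exceeds any `C`.
Finally, every continuous `u` of unit `L²` norm is the first term of a continuous orthonormal
sequence `u · exp (2πi k H)` with `H x = ∫₀ˣ |u|²`: substituting `y = H x` turns its Gram
matrix into that of the Fourier basis of `[0,1]`.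
-/

open MeasureTheory unitInterval

/-- A sequence of continuous complex functions on `[0,1]` is orthonormal in
`L²([0,1], λ)`. -/
def OrthonormalSeq (f : ℕ → C(I, ℂ)) : Prop :=
  ∀ j k : ℕ, (∫ t, f j t * (starRingEnd ℂ) (f k t)) = if j = k then (1 : ℂ) else 0

open Set Complex
open scoped Real NNReal ENNReal

theorem integral_exp_two_pi_I_int_mul (m : ℤ) :
    ∫ y in (0 : ℝ)..1, cexp (2 * π * Complex.I * m * y) = if m = 0 then 1 else 0 := by
  split_ifs with hm
  · simp [hm]
  · have hc : (2 * π * Complex.I * m : ℂ) ≠ 0 := by simp [hm, Real.pi_ne_zero]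
    rw [integral_exp_mul_complex hc, ofReal_one, mul_one, ofReal_zero, mul_zero, exp_zero,
      show 2 * π * Complex.I * m = m * (2 * π * Complex.I) by ring, exp_int_mul_two_pi_mul_I,
      sub_self, zero_div]

theorem integral_deriv_mul_exp_two_pi_I_int_mul_comp {H ρ : ℝ → ℝ}
    (hH : ∀ x, HasDerivAt H (ρ x) x) (hρ : Continuous ρ) (h0 : H 0 = 0) (h1 : H 1 = 1)
    (m : ℤ) :
    ∫ x in (0 : ℝ)..1, (ρ x : ℂ) * cexp (2 * π * Complex.I * m * H x) =
      if m = 0 then 1 else 0 := by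
  have hsubst := intervalIntegral.integral_deriv_smul_comp (a := 0) (b := 1) (fun x _ => hH x)
    hρ.continuousOn (g := fun y : ℝ => cexp (2 * π * Complex.I * m * y)) (by fun_prop)
  simp only [Function.comp_apply, real_smul, h0, h1] at hsubst
  rw [hsubst, integral_exp_two_pi_I_int_mul]

theorem unitInterval.integral_comp_coe {E : Type*} [NormedAddCommGroup E] [NormedSpace ℝ E]
    (F : ℝ → E) : ∫ t : I, F t = ∫ x in (0 : ℝ)..1, F x := by
  rw [integral_subtype measurableSet_Icc, intervalIntegral.integral_of_le zero_le_one,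
    integral_Icc_eq_integral_Ioc]

instance unitInterval.isOpenPosMeasure_volume : (volume : Measure I).IsOpenPosMeasure where
  open_pos U hU := by
    rintro ⟨x, hx⟩
    obtain ⟨V, hV, rfl⟩ := isOpen_induced_iff.mp hU
    have hx' : (x : ℝ) ∈ closure (Ioo 0 1) := by
      rw [closure_Ioo zero_ne_one]; exact x.2
    obtain ⟨y, hyV, hy⟩ := mem_closure_iff.mp hx' V hV hx
    rw [volume_apply]
    refine ((hV.inter isOpen_Ioo).measure_ne_zero volume ⟨y, hyV, hy⟩) ∘ measure_mono_null ?_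
    rintro z ⟨hzV, hz⟩
    exact ⟨⟨z, Ioo_subset_Icc_self hz⟩, hzV, rfl⟩

theorem exists_orthonormalSeq_apply_zero (u : C(I, ℂ)) (hu : ∫ t, ‖u t‖ ^ 2 = 1) :
    ∃ f : ℕ → C(I, ℂ), OrthonormalSeq f ∧ f 0 = u := by
  set ρ : ℝ → ℝ := fun x => ‖IccExtend zero_le_one u x‖ ^ 2
  have hρ : Continuous ρ := (u.continuous.Icc_extend').norm.pow 2
  have hρu (t : I) : ρ t = ‖u t‖ ^ 2 := by simp only [ρ, IccExtend_val]
  set H : ℝ → ℝ := fun x => ∫ s in (0 : ℝ)..x, ρ s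
  have hH (x : ℝ) : HasDerivAt H (ρ x) x := (hρ.integral_hasStrictDerivAt 0 x).hasDerivAt
  have hHc : Continuous H := continuous_iff_continuousAt.2 fun x => (hH x).continuousAt
  have hH1 : H 1 = 1 := by
    simp only [H, ← unitInterval.integral_comp_coe, hρu, hu]
  refine ⟨fun k => ⟨fun t => u t * cexp (2 * π * Complex.I * k * H t), by fun_prop⟩,
    fun j k => ?_, by ext; simp⟩
  have hpt (t : I) : u t * cexp (2 * π * Complex.I * j * H t) *
      (starRingEnd ℂ) (u t * cexp (2 * π * Complex.I * k * H t)) =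
      ρ t * cexp (2 * π * Complex.I * ((j - k : ℤ) : ℂ) * H t) := by
    rw [map_mul, ← exp_conj, mul_mul_mul_comm, mul_conj', ← exp_add, hρu]
    simp only [map_mul, map_ofNat, conj_ofReal, conj_I, map_natCast]
    push_cast
    ring_nf
  simp only [ContinuousMap.coe_mk, hpt]
  rw [unitInterval.integral_comp_coe
      (fun x => (ρ x : ℂ) * cexp (2 * π * Complex.I * ((j - k : ℤ) : ℂ) * H x)),
    integral_deriv_mul_exp_two_pi_I_int_mul_comp hH hρ intervalIntegral.integral_same hH1]
  simp [sub_eq_zero]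

theorem MeasureTheory.Measure.MutuallySingular.exists_continuous_integral_gt_integral_sq_lt
    {X : Type*} [TopologicalSpace X] [NormalSpace X] [MeasurableSpace X]
    [OpensMeasurableSpace X] {μ ν : Measure X} [IsFiniteMeasure μ] [μ.WeaklyRegular]
    [IsFiniteMeasure ν] [ν.OuterRegular] (h : μ ⟂ₘ ν) {r : ℝ≥0} (hr : r < μ univ) {ε : ℝ}
    (hε : 0 < ε) :
    ∃ g : C(X, ℝ), (∀ x, g x ∈ Icc 0 1) ∧ r < ∫ x, g x ∂μ ∧ ∫ x, g x ^ 2 ∂ν < ε := by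
  have hμs : μ h.nullSetᶜ = μ univ := by
    rw [measure_compl h.measurableSet_nullSet (measure_ne_top _ _), h.measure_nullSet, tsub_zero]
  obtain ⟨K, hKs, hK, hrK⟩ :=
    h.measurableSet_nullSet.compl.exists_lt_isClosed_of_ne_top (measure_ne_top _ _) (hμs ▸ hr)
  obtain ⟨U, hKU, hU, hUε⟩ := Set.exists_isOpen_lt_of_lt K (ENNReal.ofReal ε)
    (by rw [measure_mono_null hKs h.measure_compl_nullSet]; exact ENNReal.ofReal_pos.2 hε)
  obtain ⟨g, hg0, hg1, hg01⟩ := exists_continuous_zero_one_of_isClosed hU.isClosed_compl hK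
    (disjoint_compl_left_iff_subset.2 hKU)
  have hgi {κ : Measure X} [IsFiniteMeasure κ] (n : ℕ) : Integrable (fun x => g x ^ n) κ :=
    .of_bound (by fun_prop) 1 (.of_forall fun x => by
      rw [norm_pow, Real.norm_of_nonneg (hg01 x).1]; exact pow_le_one₀ (hg01 x).1 (hg01 x).2)
  refine ⟨g, hg01, ?_, ?_⟩
  · calc (r : ℝ) < μ.real K := ENNReal.toReal_strict_mono (measure_ne_top _ _) hrK
      _ = ∫ x, K.indicator 1 x ∂μ := (integral_indicator_one hK.measurableSet).symm
      _ ≤ ∫ x, g x ∂μ := integral_mono ((integrable_const 1).indicator hK.measurableSet)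
          (by simpa using hgi 1) fun x => by
            by_cases hx : x ∈ K
            · simp [hx, hg1 hx]
            · simp [hx, (hg01 x).1]
  · calc ∫ x, g x ^ 2 ∂ν ≤ ∫ x, U.indicator 1 x ∂ν :=
          integral_mono (hgi 2) ((integrable_const 1).indicator hU.measurableSet) fun x => by
            by_cases hx : x ∈ U
            · simpa [hx] using pow_le_one₀ (n := 2) (hg01 x).1 (hg01 x).2
            · simp [hx, hg0 (mem_compl hx)]
      _ = ν.real U := integral_indicator_one hU.measurableSet
      _ < ε := ENNReal.toReal_lt_of_lt_ofReal hUε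

theorem ContinuousMap.integral_sq_pos {X : Type*} [TopologicalSpace X] [CompactSpace X]
    [MeasurableSpace X] [OpensMeasurableSpace X] {μ : Measure X} [μ.IsOpenPosMeasure]
    [IsFiniteMeasureOnCompacts μ] {g : C(X, ℝ)} (hg : g ≠ 0) : 0 < ∫ x, g x ^ 2 ∂μ := by
  obtain ⟨x, hx⟩ := DFunLike.ne_iff.mp hg
  exact Continuous.integral_pos_of_hasCompactSupport_nonneg_nonzero (by fun_prop)
    (.of_compactSpace _) (fun t => sq_nonneg (g t)) (pow_ne_zero 2 hx)

theorem exists_orthonormalSeq_norm_integral_apply_zero_sq {g : C(I, ℝ)}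
    (hg : 0 < ∫ t, g t ^ 2) (ν : Measure I) : ∃ f : ℕ → C(I, ℂ), OrthonormalSeq f ∧
      ‖∫ t, f 0 t ∂ν‖ ^ 2 = (∫ t, g t ∂ν) ^ 2 / ∫ t, g t ^ 2 := by
  obtain ⟨f, hf, hf0⟩ := exists_orthonormalSeq_apply_zero
    ⟨fun t => ((g t / √(∫ t, g t ^ 2) : ℝ) : ℂ), by fun_prop⟩
    (by simp [div_pow, Real.sq_sqrt hg.le, integral_div, hg.ne'])
  refine ⟨f, hf, ?_⟩
  rw [hf0, ContinuousMap.coe_mk, integral_complex_ofReal, integral_div, norm_real,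
    Real.norm_eq_abs, sq_abs, div_pow, Real.sq_sqrt hg.le]

/-- If the Lebesgue decomposition of a finite Borel measure `ν` on `[0,1]` with respect
to Lebesgue measure has a nonzero singular part, then for every `C > 0` there is an
orthonormal sequence of continuous functions `(f_k)` with `∑ₖ |∫ f_k dν|² > C`. -/
theorem singular_part_gives_unbounded_fourier_sums (ν : Measure I) [IsFiniteMeasure ν]
    (hsing : ν.singularPart volume ≠ 0) :
    ∀ C > (0 : ℝ), ∃ f : ℕ → C(I, ℂ), OrthonormalSeq f ∧
      ∃ n : ℕ, C < ∑ k ∈ Finset.range n, ‖∫ t, f k t ∂ν‖ ^ 2 := by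
  intro C hC
  obtain ⟨r, hr0, hr⟩ := ENNReal.lt_iff_exists_nnreal_btwn.1 (Measure.measure_univ_pos.2 hsing)
  replace hr0 : (0 : ℝ) < r := by exact_mod_cast ENNReal.coe_pos.1 hr0
  obtain ⟨g, hg01, hgμ, hgvol⟩ := (ν.mutuallySingular_singularPart volume)
    |>.exists_continuous_integral_gt_integral_sq_lt hr (ε := r ^ 2 / C) (by positivity)
  have hgν : r < ∫ t, g t ∂ν := hgμ.trans_le <|
    integral_mono_measure (ν.singularPart_le volume) (.of_forall fun t => (hg01 t).1)
      (g.continuous.integrable_of_hasCompactSupport (.of_compactSpace _))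
  have hc : 0 < ∫ t, g t ^ 2 := ContinuousMap.integral_sq_pos <| by
    rintro rfl
    simp at hgμ
  obtain ⟨f, hf, hf0⟩ := exists_orthonormalSeq_norm_integral_apply_zero_sq hc ν
  refine ⟨f, hf, 1, ?_⟩
  rw [Finset.sum_range_one, hf0]
  calc C = r ^ 2 / (r ^ 2 / C) := by field_simp
    _ < (∫ t, g t ∂ν) ^ 2 / ∫ t, g t ^ 2 := by gcongr
end

section
/- Let η be a finite Borel measure on [0,1]×[0,1] such that ∫ a(t)·e^{2πi n s} dη(t,s) = 0 for every continuous function a : [0,1] → ℂ and every nonzero integer n. Then η is the product of its first marginal with Lebesgue measure: η = η₁ ⊗ λ, where η₁ is the Borel measure on [0,1] given by η₁(E) = η(E × [0,1]) and λ is Lebesgue measure on [0,1]. -/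
/-!
Push the second coordinate forward to the circle `ℝ/ℤ`. For a fixed continuous `f` on the first
factor, the hypothesis says that the complex measure `f(t) dη`, seen on the circle, has no Fourier
coefficients besides the zeroth; since trigonometric polynomials are dense in `C(ℝ/ℤ, ℂ)`, it
integrates every continuous `g` to `(∫ f dη) · ∫ g dHaar`. Testing against all products `f(t) g(z)`
identifies the pushforward of `η` as `η₁ ⊗ Haar`, which is also the pushforward of `η₁ ⊗ λ`. The
map to the circle only glues the endpoints `0 ~ 1`, which are null for `η₁ ⊗ λ`, hence for `η`.
-/

open MeasureTheory unitInterval Complex Set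

section WeightedIntegral

variable {α Y : Type*} [MeasurableSpace α] [TopologicalSpace Y] [CompactSpace Y]
  [MeasurableSpace Y] [OpensMeasurableSpace Y] {μ : Measure α} {w : α → ℂ} {π : α → Y}

lemma integrable_mul_comp_continuousMap (hw : Integrable w μ) (hπ : Measurable π)
    (g : C(Y, ℂ)) : Integrable (fun x => w x * g (π x)) μ :=
  hw.mul_bdd (g.continuous.measurable.comp hπ).aestronglyMeasurable
    (.of_forall fun x => g.norm_coe_le_norm (π x))

variable (μ w π) in
noncomputable def integralMulCompCLM (hw : Integrable w μ) (hπ : Measurable π) :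
    C(Y, ℂ) →L[ℂ] ℂ :=
  LinearMap.mkContinuous
    { toFun := fun g => ∫ x, w x * g (π x) ∂μ
      map_add' := fun g g' => by
        simp only [ContinuousMap.add_apply, mul_add]
        exact integral_add (integrable_mul_comp_continuousMap hw hπ g)
          (integrable_mul_comp_continuousMap hw hπ g')
      map_smul' := fun c g => by
        simp only [ContinuousMap.smul_apply, smul_eq_mul, RingHom.id_apply, mul_left_comm _ c]
        exact integral_const_mul c _ }
    (∫ x, ‖w x‖ ∂μ) fun g => by
      simp only [LinearMap.coe_mk, AddHom.coe_mk]
      rw [← integral_mul_const]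
      refine norm_integral_le_of_norm_le (hw.norm.mul_const _) (.of_forall fun x => ?_)
      rw [norm_mul]
      exact mul_le_mul_of_nonneg_left (g.norm_coe_le_norm _) (norm_nonneg _)

@[simp]
lemma integralMulCompCLM_apply (hw : Integrable w μ) (hπ : Measurable π) (g : C(Y, ℂ)) :
    integralMulCompCLM μ w π hw hπ g = ∫ x, w x * g (π x) ∂μ :=
  rfl

end WeightedIntegral

namespace AddCircle

variable {T : ℝ} [Fact (0 < T)]

lemma integral_fourier_haarAddCircle (n : ℤ) :
    ∫ z, fourier n z ∂(haarAddCircle : Measure (AddCircle T)) = if n = 0 then 1 else 0 := by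
  split_ifs with hn
  · simp [hn]
  · exact integral_eq_zero_of_add_right_eq_neg (fourier_add_half_inv_index hn Fact.out)

variable {α : Type*} [MeasurableSpace α] {μ : Measure α} {w : α → ℂ} {π : α → AddCircle T}

theorem integral_mul_comp_eq_of_integral_mul_fourier_eq_zero (hw : Integrable w μ)
    (hπ : Measurable π) (h : ∀ n : ℤ, n ≠ 0 → ∫ x, w x * fourier n (π x) ∂μ = 0)
    (g : C(AddCircle T, ℂ)) :
    ∫ x, w x * g (π x) ∂μ = (∫ x, w x ∂μ) * ∫ z, g z ∂haarAddCircle := by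
  have hdense : Dense (Submodule.span ℂ (Set.range (fourier (T := T))) : Set C(AddCircle T, ℂ)) :=
    Submodule.dense_iff_topologicalClosure_eq_top.mpr span_fourier_closure_eq_top
  have hCLM : integralMulCompCLM μ w π hw hπ = (∫ x, w x ∂μ) •
      integralMulCompCLM haarAddCircle 1 id (integrable_const 1) measurable_id := by
    refine ContinuousLinearMap.ext_on hdense ?_
    rintro _ ⟨n, rfl⟩
    simp only [FunLike.coe_smul, Pi.smul_apply, integralMulCompCLM_apply, Pi.one_apply, one_mul,
      id, integral_fourier_haarAddCircle, smul_eq_mul]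
    split_ifs with hn
    · simp [hn]
    · rw [h n hn, mul_zero]
  simpa using congrArg (· g) hCLM

end AddCircle

namespace unitInterval

def toCircle (x : I) : UnitAddCircle := (x : ℝ)

@[fun_prop]
lemma continuous_toCircle : Continuous toCircle :=
  (AddCircle.continuous_mk' 1).comp continuous_subtype_val

@[fun_prop]
lemma measurable_toCircle : Measurable toCircle :=
  continuous_toCircle.measurable

lemma fourier_toCircle (n : ℤ) (x : I) :
    fourier n (toCircle x) = exp (2 * Real.pi * Complex.I * n * (x : ℝ)) := by
  rw [toCircle, fourier_coe_apply, ofReal_one, div_one]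

lemma toCircle_eq_zero_iff {x : I} : toCircle x = 0 ↔ x = 0 ∨ x = 1 := by
  rw [toCircle, AddCircle.coe_eq_zero_iff]
  constructor
  · rintro ⟨n, hn⟩
    have hn : (n : ℝ) = x := by simpa using hn
    have h0 : (0 : ℤ) ≤ n := by exact_mod_cast hn ▸ x.2.1
    have h1 : n ≤ 1 := by exact_mod_cast hn ▸ x.2.2
    obtain rfl | rfl : n = 0 ∨ n = 1 := by omega
    · exact .inl (Subtype.ext (by simpa using hn.symm))
    · exact .inr (Subtype.ext (by simpa using hn.symm))
  · rintro (rfl | rfl)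
    · exact ⟨0, by simp⟩
    · exact ⟨1, by simp⟩

lemma exists_measurable_leftInverse_toCircle :
    ∃ ψ : UnitAddCircle → I, Measurable ψ ∧ ∀ x : I, x ≠ 1 → ψ (toCircle x) = x := by
  have hsub : Ico (0 : ℝ) (0 + 1) ⊆ Icc 0 1 := by
    rw [zero_add]; exact Ico_subset_Icc_self
  refine ⟨inclusion hsub ∘ AddCircle.measurableEquivIco 1 0,
    (measurable_inclusion hsub).comp (MeasurableEquiv.measurable _), fun x hx => ?_⟩
  have hx' : (x : ℝ) ∈ Ico (0 : ℝ) (0 + 1) :=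
    ⟨x.2.1, by rw [zero_add]; exact lt_of_le_of_ne x.2.2 (Subtype.coe_ne_coe.mpr hx)⟩
  exact Subtype.ext (AddCircle.equivIco_coe_of_mem hx')

lemma map_volume_toCircle :
    (volume : Measure I).map toCircle = AddCircle.haarAddCircle := by
  have hIoc : (volume : Measure ℝ).restrict (Icc 0 1) = volume.restrict (Ioc 0 (0 + 1)) := by
    rw [zero_add]; exact Measure.restrict_congr_set Ioc_ae_eq_Icc.symm
  rw [show toCircle = ((↑) : ℝ → UnitAddCircle) ∘ Subtype.val from rfl,
    ← Measure.map_map AddCircle.measurable_mk' measurable_subtype_coe,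
    measurePreserving_coe.map_eq, hIoc, (UnitAddCircle.measurePreserving_mk 0).map_eq,
    AddCircle.volume_eq_smul_haarAddCircle, ENNReal.ofReal_one, one_smul]

end unitInterval

theorem MeasureTheory.Measure.ext_of_map_prodMap_toCircle {X : Type*} [MeasurableSpace X]
    {μ ν : Measure (X × I)}
    (h : μ.map (Prod.map id toCircle) = ν.map (Prod.map id toCircle))
    (hν : ν (univ ×ˢ {0, 1}) = 0) : μ = ν := by
  obtain ⟨ψ, hψ, hψ_toCircle⟩ := exists_measurable_leftInverse_toCircle
  have hΦ : Measurable (Prod.map (id : X → X) toCircle) := by fun_prop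
  have hpre : Prod.map id toCircle ⁻¹' (univ ×ˢ {0}) = (univ ×ˢ {0, 1} : Set (X × I)) := by
    ext p; simp [toCircle_eq_zero_iff]
  have hZ : MeasurableSet (univ ×ˢ {0} : Set (X × UnitAddCircle)) :=
    MeasurableSet.univ.prod (measurableSet_singleton 0)
  have hμ : μ (univ ×ˢ {0, 1}) = 0 := by
    rw [← hpre, ← Measure.map_apply hΦ hZ, h, Measure.map_apply hΦ hZ, hpre, hν]
  have hlift : ∀ ρ : Measure (X × I), ρ (univ ×ˢ {0, 1}) = 0 →
      (ρ.map (Prod.map id toCircle)).map (Prod.map id ψ) = ρ := by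
    intro ρ hρ
    rw [Measure.map_map (measurable_id.prodMap hψ) hΦ]
    conv_rhs => rw [← Measure.map_id (μ := ρ)]
    refine Measure.map_congr (measure_mono_null (fun p hp => ?_) hρ)
    by_contra hp'
    exact hp (Prod.ext rfl (hψ_toCircle p.2 fun h1 => hp' ⟨trivial, .inr h1⟩))
  rw [← hlift μ hμ, h, hlift ν hν]

theorem map_prodMap_toCircle_eq_prod {X : Type*} [TopologicalSpace X] [MeasurableSpace X]
    [BorelSpace X] [HasOuterApproxClosed X] (η : Measure (X × I)) [IsFiniteMeasure η]
    (h : ∀ a : C(X, ℂ), ∀ n : ℤ, n ≠ 0 →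
      (∫ p : X × I, a p.1 *
        Complex.exp (2 * Real.pi * Complex.I * (n : ℂ) * ((p.2 : ℝ) : ℂ)) ∂η) = 0) :
    η.map (Prod.map id toCircle) = (η.map Prod.fst).prod AddCircle.haarAddCircle := by
  refine Measure.eq_prod_of_integral_mul_boundedContinuousFunction fun f g => ?_
  have hfourier : ∀ n : ℤ, n ≠ 0 →
      ∫ p : X × I, (f p.1 : ℂ) * fourier n (toCircle p.2) ∂η = 0 := fun n hn => by
    simp_rw [fourier_toCircle]
    exact h ⟨fun t => (f t : ℂ), by fun_prop⟩ n hn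
  have hw : Integrable (fun p : X × I => (f p.1 : ℂ)) η :=
    (BoundedContinuousFunction.integrable _ f).ofReal.comp_measurable measurable_fst
  have key := AddCircle.integral_mul_comp_eq_of_integral_mul_fourier_eq_zero hw
    (measurable_toCircle.comp measurable_snd) hfourier ⟨fun z => (g z : ℂ), by fun_prop⟩
  rw [integral_map (by fun_prop) (by fun_prop), integral_map measurable_fst.aemeasurable
    (by fun_prop)]
  apply ofReal_injective
  simp only [Prod.map_fst, Prod.map_snd, id_eq, ← integral_complex_ofReal, ofReal_mul]
  exact key

/-- If a finite Borel measure `η` on `[0,1] × [0,1]` satisfies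
`∫ a(t) e^{2πins} dη(t,s) = 0` for every continuous `a` and every nonzero integer `n`,
then `η` is the product of its first marginal with Lebesgue measure. -/
theorem vanishing_fourier_implies_product (η : Measure (I × I)) [IsFiniteMeasure η]
    (h : ∀ a : C(I, ℂ), ∀ n : ℤ, n ≠ 0 →
      (∫ p : I × I, a p.1 *
        Complex.exp (2 * Real.pi * Complex.I * (n : ℂ) * ((p.2 : ℝ) : ℂ)) ∂η) = 0) :
    η = (η.map Prod.fst).prod (volume : Measure I) := by
  refine Measure.ext_of_map_prodMap_toCircle ?_ ?_
  · rw [map_prodMap_toCircle_eq_prod η h, ← Measure.map_prod_map _ _ measurable_id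
      measurable_toCircle, Measure.map_id, map_volume_toCircle]
  · rw [Measure.prod_prod, (toFinite ({0, 1} : Set I)).measure_zero, mul_zero]
end

section
/- Let g : [0,1] → ℂ be Lebesgue-integrable and suppose that C := sup{ |∫₀¹ a·g dλ| : a ∈ C([0,1],ℂ), ∫₀¹ |a|² dλ ≤ 1 } is finite. Then g ∈ L²([0,1],λ) and the L²-norm of g equals C. -/
/-!
Pairing with `g` is bounded by `C` times the `L²` norm on continuous functions (after rescaling).
Continuous functions are dense in `L²(λ + |g| λ)`, and convergence there controls both the
`L²(λ)` norm and the pairing with `g`, so the bound extends to all bounded measurable `f`.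
Testing it on `f = conj gₙ` for the truncations `gₙ = g · 1_{|g| ≤ n}` gives `‖gₙ‖₂² ≤ C ‖gₙ‖₂`,
hence `‖g‖₂ ≤ C` by Fatou; the reverse inequality is Cauchy–Schwarz.
-/

open MeasureTheory Filter Topology ComplexConjugate unitInterval
open scoped ENNReal NNReal BoundedContinuousFunction

namespace MeasureTheory

variable {X 𝕜 : Type*} [RCLike 𝕜] [MeasurableSpace X] {μ : Measure X}

theorem MemLp.eLpNorm_two_sq {h : X → 𝕜} (hh : MemLp h 2 μ) :
    eLpNorm h 2 μ ^ 2 = ENNReal.ofReal (∫ x, ‖h x‖ ^ 2 ∂μ) := by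
  rw [ofReal_integral_eq_lintegral_ofReal (hh.integrable_norm_pow two_ne_zero)
    (ae_of_all _ fun x => by positivity)]
  have h2 := eLpNorm_nnreal_pow_eq_lintegral (f := h) (μ := μ) (p := 2) two_ne_zero
  simp only [ENNReal.coe_ofNat, NNReal.coe_ofNat, ENNReal.rpow_two] at h2
  rw [h2]
  refine lintegral_congr fun x => ?_
  rw [ENNReal.ofReal_pow (norm_nonneg _), ofReal_norm]

theorem MemLp.enorm_integral_conj_mul_self {h : X → 𝕜} (hh : MemLp h 2 μ) :
    ‖∫ x, conj (h x) * h x ∂μ‖ₑ = eLpNorm h 2 μ ^ 2 := by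
  simp_rw [RCLike.conj_mul]
  norm_cast
  rw [← ofReal_norm, RCLike.norm_ofReal,
    abs_of_nonneg (integral_nonneg fun x => by positivity), hh.eLpNorm_two_sq]

theorem MemLp.mono_ac_top {ν : Measure X} {f : X → 𝕜} (hf : MemLp f ∞ μ) (hνμ : ν ≪ μ) :
    MemLp f ∞ ν :=
  ⟨hf.1.mono_ac hνμ, by
    simpa only [eLpNorm_exponent_top] using
      (eLpNormEssSup_mono_measure f hνμ).trans_lt (eLpNorm_exponent_top (f := f) ▸ hf.2)⟩

theorem enorm_integral_mul_le_eLpNorm_mul_eLpNorm {f g : X → 𝕜}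
    (hf : AEStronglyMeasurable f μ) (hg : AEStronglyMeasurable g μ) :
    ‖∫ x, f x * g x ∂μ‖ₑ ≤ eLpNorm f 2 μ * eLpNorm g 2 μ :=
  calc ‖∫ x, f x * g x ∂μ‖ₑ ≤ eLpNorm (f * g) 1 μ := by
        rw [eLpNorm_one_eq_lintegral_enorm]
        exact enorm_integral_le_lintegral_enorm _
    _ ≤ eLpNorm f 2 μ * eLpNorm g 2 μ := by
        simpa only [smul_eq_mul] using
          eLpNorm_smul_le_mul_eLpNorm (p := 2) (q := 2) (r := 1) hg hf

theorem enorm_integral_mul_le_eLpNorm_withDensity {f g : X → 𝕜} (hf : AEMeasurable f μ)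
    (hg : AEMeasurable g μ) :
    ‖∫ x, f x * g x ∂μ‖ₑ ≤ eLpNorm f 1 (μ.withDensity fun x => ‖g x‖ₑ) := by
  rw [eLpNorm_one_eq_lintegral_enorm, lintegral_withDensity_eq_lintegral_mul₀ hg.enorm hf.enorm]
  refine (enorm_integral_le_lintegral_enorm _).trans_eq (lintegral_congr fun x => ?_)
  rw [enorm_mul, mul_comm]
  rfl

section BoundedContinuous

variable [TopologicalSpace X] [BorelSpace X] [IsFiniteMeasure μ]

theorem enorm_integral_mul_le_of_forall_integral_norm_sq_le_one {g : X → 𝕜} {C : ℝ}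
    (hC : ∀ b : X →ᵇ 𝕜, ∫ x, ‖b x‖ ^ 2 ∂μ ≤ 1 → ‖∫ x, b x * g x ∂μ‖ ≤ C) (b : X →ᵇ 𝕜) :
    ‖∫ x, b x * g x ∂μ‖ₑ ≤ ENNReal.ofReal C * eLpNorm b 2 μ := by
  have hb : MemLp b 2 μ := b.memLp_top.mono_exponent le_top
  rcases eq_or_ne (eLpNorm b 2 μ) 0 with h0 | h0
  · have hb0 : ⇑b =ᵐ[μ] 0 := (eLpNorm_eq_zero_iff hb.1 two_ne_zero).1 h0
    rw [integral_eq_zero_of_ae (hb0.mono fun x hx => by simp [hx])]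
    simp
  set r := (eLpNorm b 2 μ).toReal
  have hr : 0 < r := ENNReal.toReal_pos h0 hb.2.ne
  have hbr : ∫ x, ‖b x‖ ^ 2 ∂μ = r ^ 2 := by
    rw [← ENNReal.ofReal_eq_ofReal_iff (integral_nonneg fun x => by positivity) (by positivity),
      ← hb.eLpNorm_two_sq, ENNReal.ofReal_pow hr.le, ENNReal.ofReal_toReal hb.2.ne]
  have key := hC (r⁻¹ • b) <| by
    simp only [BoundedContinuousFunction.coe_smul, norm_smul, Real.norm_eq_abs, abs_inv,
      abs_of_pos hr, mul_pow, integral_const_mul, hbr]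
    rw [← mul_pow, inv_mul_cancel₀ hr.ne', one_pow]
  simp only [BoundedContinuousFunction.coe_smul, smul_mul_assoc, integral_smul,
    norm_smul, Real.norm_eq_abs, abs_inv, abs_of_pos hr] at key
  rw [← ofReal_norm, ← ENNReal.ofReal_toReal hb.2.ne, ← ENNReal.ofReal_mul' hr.le]
  exact ENNReal.ofReal_le_ofReal (by rwa [inv_mul_le_iff₀ hr, mul_comm] at key)

/- The approximation takes place in `L²(μ + ν)` with `ν = |g| μ`: the `L²(μ)` error is dominated
by it, and so is the pairing error, through `L²(ν) ⊆ L¹(ν)`. -/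
theorem exists_seq_boundedContinuous_tendsto_integral_mul
    [TopologicalSpace.PseudoMetrizableSpace X] {g : X → 𝕜} (hg : Integrable g μ)
    {f : X → 𝕜} (hf : MemLp f ∞ μ) :
    ∃ b : ℕ → X →ᵇ 𝕜, Tendsto (fun n => eLpNorm (f - ⇑(b n)) 2 μ) atTop (𝓝 0) ∧
      Tendsto (fun n => ∫ x, b n x * g x ∂μ) atTop (𝓝 (∫ x, f x * g x ∂μ)) := by
  set ν := μ.withDensity fun x => ‖g x‖ₑ
  have : IsFiniteMeasure ν := isFiniteMeasure_withDensity hg.2.ne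
  have hνμ : ν ≪ μ := withDensity_absolutelyContinuous μ _
  have hf₂ : MemLp f 2 (μ + ν) :=
    (hf.mono_ac_top (Measure.AbsolutelyContinuous.rfl.add_left hνμ)).mono_exponent le_top
  choose b hb _ using fun n : ℕ => hf₂.exists_boundedContinuous_eLpNorm_sub_le
    ENNReal.ofNat_ne_top (ENNReal.inv_ne_zero.2 (ENNReal.natCast_ne_top n))
  have he : Tendsto (fun n => eLpNorm (f - ⇑(b n)) 2 (μ + ν)) atTop (𝓝 0) :=
    tendsto_of_tendsto_of_tendsto_of_le_of_le tendsto_const_nhds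
      ENNReal.tendsto_inv_nat_nhds_zero (fun _ => zero_le) hb
  refine ⟨b, tendsto_of_tendsto_of_tendsto_of_le_of_le tendsto_const_nhds he (fun _ => zero_le)
    fun n => eLpNorm_le_add_measure_right _ _ _, ?_⟩
  set K := ν Set.univ ^ (1 / (1 : ℝ≥0∞).toReal - 1 / (2 : ℝ≥0∞).toReal)
  have hK : K ≠ ∞ := ENNReal.rpow_ne_top_of_nonneg (by norm_num) (measure_ne_top _ _)
  refine tendsto_iff_edist_tendsto_0.2 <| tendsto_of_tendsto_of_tendsto_of_le_of_le
    tendsto_const_nhds (by simpa using ENNReal.Tendsto.mul_const he (.inr hK)) (fun _ => zero_le)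
    fun n => ?_
  have hsub : AEStronglyMeasurable (⇑(b n) - f) μ :=
    (b n).continuous.aestronglyMeasurable.sub hf.1
  calc edist (∫ x, b n x * g x ∂μ) (∫ x, f x * g x ∂μ)
      = ‖∫ x, (⇑(b n) - f) x * g x ∂μ‖ₑ := by
        have hbg : Integrable (fun x => b n x * g x) μ := hg.mul_of_top_right (b n).memLp_top
        have hfg : Integrable (fun x => f x * g x) μ := hg.mul_of_top_right hf
        rw [edist_eq_enorm_sub, ← integral_sub hbg hfg]
        simp_rw [Pi.sub_apply, sub_mul]
    _ ≤ eLpNorm (⇑(b n) - f) 1 ν :=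
        enorm_integral_mul_le_eLpNorm_withDensity hsub.aemeasurable hg.1.aemeasurable
    _ ≤ eLpNorm (⇑(b n) - f) 2 ν * K :=
        eLpNorm_le_eLpNorm_mul_rpow_measure_univ one_le_two (hsub.mono_ac hνμ)
    _ ≤ eLpNorm (f - ⇑(b n)) 2 (μ + ν) * K := by
        rw [eLpNorm_sub_comm]
        gcongr
        exact Measure.le_add_left le_rfl

theorem enorm_integral_mul_le_of_forall_boundedContinuous
    [TopologicalSpace.PseudoMetrizableSpace X] {g : X → 𝕜} (hg : Integrable g μ) {C : ℝ≥0}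
    (hC : ∀ b : X →ᵇ 𝕜, ‖∫ x, b x * g x ∂μ‖ₑ ≤ C * eLpNorm b 2 μ) {f : X → 𝕜}
    (hf : MemLp f ∞ μ) :
    ‖∫ x, f x * g x ∂μ‖ₑ ≤ C * eLpNorm f 2 μ := by
  obtain ⟨b, hfb, hbg⟩ := exists_seq_boundedContinuous_tendsto_integral_mul hg hf
  have hlim : Tendsto (fun n => C * (eLpNorm f 2 μ + eLpNorm (f - ⇑(b n)) 2 μ)) atTop
      (𝓝 (C * eLpNorm f 2 μ)) := by
    simpa using ENNReal.Tendsto.const_mul (tendsto_const_nhds.add hfb) (.inr ENNReal.coe_ne_top)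
  refine le_of_tendsto_of_tendsto' ((continuous_enorm.tendsto _).comp hbg) hlim fun n => ?_
  calc ‖∫ x, b n x * g x ∂μ‖ₑ ≤ C * eLpNorm (b n) 2 μ := hC (b n)
    _ ≤ C * (eLpNorm f 2 μ + eLpNorm (f - ⇑(b n)) 2 μ) := by
        gcongr
        calc eLpNorm (b n) 2 μ = eLpNorm (f - (f - ⇑(b n))) 2 μ := by rw [sub_sub_cancel]
          _ ≤ _ := eLpNorm_sub_le hf.1 (hf.1.sub (b n).continuous.aestronglyMeasurable)
            one_le_two

end BoundedContinuous

theorem eLpNorm_two_le_of_forall_memLp_top [IsFiniteMeasure μ] {g : X → 𝕜}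
    (hg : AEStronglyMeasurable g μ) {C : ℝ≥0∞}
    (hC : ∀ f : X → 𝕜, MemLp f ∞ μ → ‖∫ x, f x * g x ∂μ‖ₑ ≤ C * eLpNorm f 2 μ) :
    eLpNorm g 2 μ ≤ C := by
  set t : ℕ → X → 𝕜 := fun n => {x | ‖g x‖ ≤ n}.indicator g
  have ht : ∀ n, MemLp (t n) ∞ μ := fun n =>
    memLp_top_of_bound
      (hg.indicator₀ (nullMeasurableSet_le hg.norm.aemeasurable aemeasurable_const))
      n (ae_of_all _ fun x => by by_cases hx : ‖g x‖ ≤ n <;> simp [t, hx])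
  have hbound : ∀ n, eLpNorm (t n) 2 μ ≤ C := by
    intro n
    have ht2 : MemLp (t n) 2 μ := (ht n).mono_exponent le_top
    have hpair : ∫ x, conj (t n x) * g x ∂μ = ∫ x, conj (t n x) * t n x ∂μ :=
      integral_congr_ae (ae_of_all _ fun x => by by_cases hx : ‖g x‖ ≤ n <;> simp [t, hx])
    have h := hC (star (t n)) (ht n).star
    rw [eLpNorm_star] at h
    simp only [Pi.star_apply, ← starRingEnd_apply] at h
    rw [hpair, ht2.enorm_integral_conj_mul_self, sq] at h
    rcases eq_or_ne (eLpNorm (t n) 2 μ) 0 with h0 | h0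
    · simp [h0]
    · exact (ENNReal.mul_le_mul_iff_left h0 ht2.2.ne).1 h
  calc eLpNorm g 2 μ ≤ atTop.liminf fun n => eLpNorm (t n) 2 μ :=
        Lp.eLpNorm_lim_le_liminf_eLpNorm (fun n => (ht n).1) g (ae_of_all _ fun x =>
          tendsto_atTop_of_eventually_const (i₀ := ⌈‖g x‖⌉₊) fun n hn => by
            simp [t, Nat.ceil_le.1 hn])
    _ ≤ C := liminf_le_of_frequently_le' (Frequently.of_forall hbound)

end MeasureTheory

/-- If `g ∈ L¹([0,1])` and the supremum `C` of `|∫ a·g dλ|` over continuous `a` with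
`∫|a|² dλ ≤ 1` is finite, then `g ∈ L²([0,1], λ)` and `‖g‖₂ = C`. -/
theorem duality_L2_norm (g : I → ℂ) (hg : Integrable g volume)
    (S : Set ℝ)
    (hS : S = {r : ℝ | ∃ a : C(I, ℂ), (∫ t, ‖a t‖ ^ 2) ≤ 1 ∧ r = ‖∫ t, a t * g t‖})
    (hbdd : BddAbove S) :
    MemLp g 2 (volume : Measure I) ∧ (eLpNorm g 2 volume).toReal = sSup S := by
  have hmemS (a : C(I, ℂ)) (ha : ∫ t, ‖a t‖ ^ 2 ≤ 1) : ‖∫ t, a t * g t‖ ∈ S :=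
    hS ▸ ⟨a, ha, rfl⟩
  have h0S : (0 : ℝ) ∈ S := by simpa using hmemS 0 (by simp)
  have hC0 : 0 ≤ sSup S := le_csSup hbdd h0S
  have hL2 : eLpNorm g 2 volume ≤ ENNReal.ofReal (sSup S) :=
    eLpNorm_two_le_of_forall_memLp_top hg.1 fun f hf =>
      enorm_integral_mul_le_of_forall_boundedContinuous hg
        (enorm_integral_mul_le_of_forall_integral_norm_sq_le_one
          fun b hb => le_csSup hbdd (hmemS b.toContinuousMap hb)) hf
  have hmem : MemLp g 2 volume := ⟨hg.1, hL2.trans_lt ENNReal.ofReal_lt_top⟩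
  refine ⟨hmem, le_antisymm (ENNReal.toReal_le_of_le_ofReal hC0 hL2) (csSup_le ⟨0, h0S⟩ ?_)⟩
  intro r hr
  rw [hS] at hr
  obtain ⟨a, ha, rfl⟩ := hr
  have haL2 : MemLp a 2 volume := a.memLp volume ℝ
  have ha1 : eLpNorm a 2 volume ≤ 1 := by
    rw [← pow_le_one_iff two_ne_zero, haL2.eLpNorm_two_sq]
    exact ENNReal.ofReal_le_one.2 ha
  calc ‖∫ t, a t * g t‖ = ‖∫ t, a t * g t‖ₑ.toReal := (toReal_enorm _).symm
    _ ≤ (eLpNorm a 2 volume * eLpNorm g 2 volume).toReal :=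
        ENNReal.toReal_mono (ENNReal.mul_lt_top haL2.2 hmem.2).ne <|
          enorm_integral_mul_le_eLpNorm_mul_eLpNorm haL2.1 hg.1
    _ ≤ (eLpNorm g 2 volume).toReal := ENNReal.toReal_mono hmem.2.ne (mul_le_of_le_one_left' ha1)
end

section
/- Let μ be a finite measure on a measurable space X, let (f_k) be a sequence of measurable functions f_k : X → ℂ with |f_k(x)| ≤ 1 for μ-almost every x, and let α ∈ ℂ with |α| = 1. If ∫ f_k dμ → α·μ(X) as k → ∞, then f_k converges to the constant function α in μ-measure, i.e., for every ε > 0, μ({x : |f_k(x) − α| ≥ ε}) → 0 as k → ∞. -/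
open MeasureTheory Filter
open scoped Topology ComplexConjugate

/-!
For `‖z‖ ≤ 1` and `‖α‖ = 1` one has `‖z - α‖² ≤ 2 (1 - Re (conj α * z))`. The right-hand side,
taken at `z = f_k x`, has integral `2 (μ(X) - Re (conj α * ∫ f_k))`, which tends to `0` by
hypothesis; Markov's inequality then gives convergence in measure.
-/

theorem tendstoInMeasure_of_dist_sq_le {X ι E : Type*} [MeasurableSpace X] {μ : Measure X}
    [PseudoMetricSpace E] {l : Filter ι} {f : ι → X → E} {g : X → E} {h : ι → X → ℝ}
    (hint : ∀ i, Integrable (h i) μ) (hle : ∀ i, ∀ᵐ x ∂μ, dist (f i x) (g x) ^ 2 ≤ h i x)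
    (hlim : Tendsto (fun i => ∫ x, h i x ∂μ) l (𝓝 0)) :
    TendstoInMeasure μ f l g := by
  rw [tendstoInMeasure_iff_dist]
  intro ε hε
  have hε2 : ENNReal.ofReal (ε ^ 2) ≠ 0 := by positivity
  have markov : ∀ i, μ {x | ε ≤ dist (f i x) (g x)} ≤
      ENNReal.ofReal (∫ x, h i x ∂μ) / ENNReal.ofReal (ε ^ 2) := fun i => calc
    μ {x | ε ≤ dist (f i x) (g x)} ≤ μ {x | ENNReal.ofReal (ε ^ 2) ≤ ENNReal.ofReal (h i x)} :=
      measure_mono_ae <| (hle i).mono fun x hx hεx =>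
        ENNReal.ofReal_le_ofReal <| (pow_le_pow_left₀ hε.le hεx 2).trans hx
    _ ≤ (∫⁻ x, ENNReal.ofReal (h i x) ∂μ) / ENNReal.ofReal (ε ^ 2) :=
      meas_ge_le_lintegral_div (hint i).1.aemeasurable.ennreal_ofReal hε2 ENNReal.ofReal_ne_top
    _ = ENNReal.ofReal (∫ x, h i x ∂μ) / ENNReal.ofReal (ε ^ 2) := by
      rw [ofReal_integral_eq_lintegral_ofReal (hint i)
        ((hle i).mono fun x hx => (sq_nonneg _).trans hx)]
  have hbound : Tendsto (fun i => ENNReal.ofReal (∫ x, h i x ∂μ) / ENNReal.ofReal (ε ^ 2)) l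
      (𝓝 0) := by
    simpa using ENNReal.Tendsto.div_const (ENNReal.tendsto_ofReal hlim) (Or.inr hε2)
  exact tendsto_of_tendsto_of_tendsto_of_le_of_le tendsto_const_nhds hbound
    (fun _ => zero_le) markov

theorem Complex.norm_sub_sq_le_two_mul_one_sub_re_conj_mul {z w : ℂ} (hz : ‖z‖ ≤ 1)
    (hw : ‖w‖ = 1) : ‖z - w‖ ^ 2 ≤ 2 * (1 - (conj w * z).re) := by
  have hexp : ‖z - w‖ ^ 2 = ‖z‖ ^ 2 + ‖w‖ ^ 2 - 2 * (conj w * z).re := by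
    simp only [Complex.sq_norm, Complex.normSq_apply, Complex.sub_re, Complex.sub_im,
      Complex.mul_re, Complex.conj_re, Complex.conj_im]
    ring
  nlinarith [norm_nonneg z]

theorem integral_one_sub_re_conj_mul {X : Type*} [MeasurableSpace X] {μ : Measure X}
    [IsFiniteMeasure μ] {f : X → ℂ} (hf : Integrable f μ) (α : ℂ) :
    ∫ x, (1 - (conj α * f x).re) ∂μ = μ.real Set.univ - (conj α * ∫ x, f x ∂μ).re := by
  have hre : Integrable (fun x => (conj α * f x).re) μ := (hf.const_mul _).re
  rw [integral_sub (integrable_const 1) hre, integral_const, smul_eq_mul, mul_one,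
    ← integral_const_mul]
  congr 1
  exact integral_re (hf.const_mul _)

/-- If `μ` is a finite measure, `(f_k)` are measurable functions with `|f_k| ≤ 1`
a.e., `|α| = 1`, and `∫ f_k dμ → α·μ(X)`, then `f_k → α` in `μ`-measure. -/
theorem tendsto_const_in_measure_of_integral {X : Type*} [MeasurableSpace X]
    (μ : Measure X) [IsFiniteMeasure μ]
    (f : ℕ → X → ℂ) (hmeas : ∀ k, Measurable (f k))
    (hbd : ∀ k, ∀ᵐ x ∂μ, ‖f k x‖ ≤ 1)
    (α : ℂ) (hα : ‖α‖ = 1)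
    (hconv : Tendsto (fun k => ∫ x, f k x ∂μ) atTop
      (𝓝 (α * ((μ Set.univ).toReal : ℂ)))) :
    TendstoInMeasure μ f atTop (fun _ => α) := by
  have hint : ∀ k, Integrable (f k) μ := fun k =>
    (integrable_const (1 : ℝ)).mono' (hmeas k).aestronglyMeasurable (hbd k)
  refine tendstoInMeasure_of_dist_sq_le (h := fun k x => 2 * (1 - (conj α * f k x).re))
    (fun k => ((integrable_const 1).sub ((hint k).const_mul _).re).const_mul 2)
    (fun k => (hbd k).mono fun x hx => ?_) ?_
  · rw [dist_eq_norm]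
    exact Complex.norm_sub_sq_le_two_mul_one_sub_re_conj_mul hx hα
  have hlim_re : (conj α * (α * ((μ Set.univ).toReal : ℂ))).re = μ.real Set.univ := by
    rw [← mul_assoc, mul_comm (conj α), Complex.mul_conj', hα]
    simp [Measure.real]
  have hre := (Complex.continuous_re.tendsto _).comp (hconv.const_mul (conj α))
  rw [hlim_re] at hre
  simp_rw [integral_const_mul, integral_one_sub_re_conj_mul (hint _)]
  simpa using (tendsto_const_nhds (x := μ.real Set.univ)).sub hre |>.const_mul (2 : ℝ)
end

section
/- Let μ be a finite Borel measure on [0,1] and let (n_k) be a strictly increasing sequence of positive integers such that the functions t ↦ e^{−2πi n_k t} converge in μ-measure to the constant e^{2πiθ} for some irrational number θ. Then μ is β-rigid for every β ∈ ℂ with |β| = 1: for each such β there exists a sequence (m_j) of nonzero integers with ∫₀¹ e^{−2πi m_j t} dμ(t) → β·μ([0,1]) as j → ∞. -/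
open MeasureTheory Filter unitInterval
open scoped Topology

/-!
With `c = e^{2πiθ}`, raising `e^{−2πi n_k t} → c` to an integer power `p` gives
`e^{−2πi p n_k t} → c^p` in measure, so by bounded convergence `c^p μ([0,1])` is a limit of
Fourier–Stieltjes coefficients of `μ` at the nonzero frequencies `p n_k`. Such limits form the
closure of the set of coefficients at nonzero frequencies, a closed set. Since `θ` is
irrational, `{c^p : p ≠ 0}` is dense in the unit circle, so this closure contains `β μ([0,1])`
for every `|β| = 1`.
-/

open Real

namespace MeasureTheory

variable {α ι E F : Type*} {m : MeasurableSpace α} {μ : Measure α}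

theorem TendstoInMeasure.comp_uniformContinuousOn [PseudoMetricSpace E] [PseudoMetricSpace F]
    {l : Filter ι} {f : ι → α → E} {g : α → E} {φ : E → F} {s : Set E}
    (hφ : UniformContinuousOn φ s) (hf : ∀ i x, f i x ∈ s) (hg : ∀ x, g x ∈ s)
    (h : TendstoInMeasure μ f l g) :
    TendstoInMeasure μ (fun i x => φ (f i x)) l (fun x => φ (g x)) := by
  rw [tendstoInMeasure_iff_dist] at h ⊢
  intro ε hε
  obtain ⟨δ, hδ, hφδ⟩ := Metric.uniformContinuousOn_iff.1 hφ ε hε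
  refine tendsto_of_tendsto_of_tendsto_of_le_of_le tendsto_const_nhds (h δ hδ)
    (fun _ => zero_le) fun i => measure_mono fun x hx => ?_
  by_contra hlt
  exact (not_le.2 (hφδ _ (hf i x) _ (hg x) (not_le.1 hlt))) hx

theorem TendstoInMeasure.tendsto_integral_of_norm_le [NormedAddCommGroup E] [NormedSpace ℝ E]
    [IsFiniteMeasure μ] {f : ℕ → α → E} {g : α → E} {C : ℝ}
    (hf : ∀ n, AEStronglyMeasurable (f n) μ) (hfC : ∀ n, ∀ᵐ x ∂μ, ‖f n x‖ ≤ C)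
    (h : TendstoInMeasure μ f atTop g) :
    Tendsto (fun n => ∫ x, f n x ∂μ) atTop (𝓝 (∫ x, g x ∂μ)) := by
  refine tendsto_of_subseq_tendsto fun ns hns => ?_
  obtain ⟨ms, -, hae⟩ := (h.comp hns).exists_seq_tendsto_ae
  exact ⟨ms, tendsto_integral_of_dominated_convergence (fun _ => C) (fun _ => hf _)
    (integrable_const C) (fun _ => hfC _) hae⟩

end MeasureTheory

/-- Together with `ConnectedSpace Circle`, this gives `(𝓝[≠] z).NeBot`. -/
instance : Nontrivial Circle := ⟨⟨1, -1, by simp [← Circle.coe_inj]; norm_num⟩⟩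

theorem Irrational.dense_image_zpow_circleExp {θ : ℝ} (hθ : Irrational θ) :
    Dense ((Circle.exp (2 * π * θ) ^ ·) '' {p : ℤ | p ≠ 0}) := by
  have hmul : DenseRange (· • (↑(2 * π * θ) : AddCircle (2 * π)) : ℤ → AddCircle (2 * π)) :=
    AddCircle.denseRange_zsmul_coe_iff.2 <| by rwa [mul_div_cancel_left₀ θ (by positivity)]
  have hpow : DenseRange (Circle.exp (2 * π * θ) ^ · : ℤ → Circle) := by
    convert AddCircle.homeomorphCircle'.surjective.denseRange.comp hmul
      AddCircle.homeomorphCircle'.continuous using 1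
    ext p
    rw [Function.comp_apply, ← AddCircle.coe_zsmul, AddCircle.homeomorphCircle'_apply_mk,
      Circle.exp_zsmul]
  refine (hpow.sdiff_singleton 1).mono ?_
  rintro _ ⟨⟨p, rfl⟩, hp⟩
  exact ⟨p, by rintro rfl; simp at hp, rfl⟩

noncomputable def fourierMode (m : ℤ) (t : I) : ℂ :=
  Complex.exp (-(2 * π * Complex.I * m * (t : ℝ)))

noncomputable def fourierStieltjes (μ : Measure I) (m : ℤ) : ℂ := ∫ t, fourierMode m t ∂μ

theorem fourierMode_eq_circleExp (m : ℤ) (t : I) :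
    fourierMode m t = Circle.exp (-(2 * π * m * t)) := by
  rw [fourierMode, Circle.coe_exp]
  push_cast
  ring_nf

theorem norm_fourierMode (m : ℤ) (t : I) : ‖fourierMode m t‖ = 1 := by
  rw [fourierMode_eq_circleExp, Circle.norm_coe]

theorem continuous_fourierMode (m : ℤ) : Continuous (fourierMode m) := by
  unfold fourierMode
  fun_prop

theorem fourierMode_mul (p m : ℤ) (t : I) : fourierMode (p * m) t = fourierMode m t ^ p := by
  rw [fourierMode_eq_circleExp, fourierMode_eq_circleExp, ← Circle.coe_zpow, ← Circle.exp_zsmul]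
  congr 2
  push_cast
  ring

theorem tendsto_fourierStieltjes_mul_of_tendstoInMeasure {μ : Measure I} [IsFiniteMeasure μ]
    {n : ℕ → ℤ} {c : ℂ} (hc : ‖c‖ = 1)
    (h : TendstoInMeasure μ (fun k => fourierMode (n k)) atTop fun _ => c) (p : ℤ) :
    Tendsto (fun k => fourierStieltjes μ (p * n k)) atTop (𝓝 (c ^ p * μ.real Set.univ)) := by
  have hzpow : UniformContinuousOn (· ^ p) (Metric.sphere (0 : ℂ) 1) :=
    (isCompact_sphere 0 1).uniformContinuousOn_of_continuous <|
      (continuousOn_zpow₀ p).mono fun z hz => by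
        simpa using ne_zero_of_mem_unit_sphere ⟨z, hz⟩
  have hpow : TendstoInMeasure μ (fun k t => fourierMode (n k) t ^ p) atTop fun _ => c ^ p :=
    h.comp_uniformContinuousOn hzpow (fun k t => by simp [norm_fourierMode])
      (fun _ => by simpa using hc)
  have := hpow.tendsto_integral_of_norm_le (C := 1)
    (fun k => by
      simpa only [← fourierMode_mul] using (continuous_fourierMode _).aestronglyMeasurable)
    (fun k => ae_of_all _ fun t => by simp [norm_fourierMode])
  simpa [fourierStieltjes, fourierMode_mul, mul_comm] using this

theorem rigidity_from_irrational_limit_general (μ : Measure I) [IsFiniteMeasure μ]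
    (n : ℕ → ℕ) (hpos : ∀ k, 0 < n k)
    (θ : ℝ) (hθ : Irrational θ)
    (hconv : TendstoInMeasure μ
      (fun k (t : I) => Complex.exp (-(2 * Real.pi * Complex.I * (n k : ℂ) * ((t : ℝ) : ℂ))))
      atTop (fun _ => Complex.exp (2 * Real.pi * Complex.I * (θ : ℂ)))) :
    ∀ β : ℂ, ‖β‖ = 1 → ∃ m : ℕ → ℤ, (∀ j, m j ≠ 0) ∧
      Tendsto (fun j => ∫ t : I,
          Complex.exp (-(2 * Real.pi * Complex.I * (m j : ℂ) * ((t : ℝ) : ℂ))) ∂μ)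
        atTop (𝓝 (β * ((μ Set.univ).toReal : ℂ))) := by
  intro β hβ
  set c : Circle := Circle.exp (2 * π * θ)
  set S := fourierStieltjes μ '' {m | m ≠ 0}
  have hconv' : TendstoInMeasure μ (fun k => fourierMode (n k)) atTop fun _ => (c : ℂ) := by
    convert hconv using 3
    · simp [fourierMode]
    · rw [Circle.coe_exp]
      push_cast
      ring_nf
  have hpow (p : ℤ) (hp : p ≠ 0) : (c ^ p : ℂ) * μ.real Set.univ ∈ closure S :=
    mem_closure_of_tendsto
      (tendsto_fourierStieltjes_mul_of_tendstoInMeasure (Circle.norm_coe c) hconv' p)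
      (Eventually.of_forall fun k => ⟨_, mul_ne_zero hp (by exact_mod_cast (hpos k).ne'), rfl⟩)
  have hβS : β * μ.real Set.univ ∈ closure S := by
    have := map_mem_closure (f := fun z : Circle => (z : ℂ) * μ.real Set.univ) (by fun_prop)
      (hθ.dense_image_zpow_circleExp (⟨β, mem_sphere_zero_iff_norm.2 hβ⟩ : Circle))
      (by rintro _ ⟨p, hp, rfl⟩; exact hpow p hp)
    rwa [closure_closure] at this
  obtain ⟨z, hzS, hz⟩ := mem_closure_iff_seq_limit.1 hβS
  choose m hm hmz using hzS
  obtain rfl : z = fun j => fourierStieltjes μ (m j) := funext fun j => (hmz j).symm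
  exact ⟨m, hm, hz⟩

/-- If `μ` is a finite Borel measure on `[0,1]` and `e^{−2πi n_k t} → e^{2πiθ}` in
`μ`-measure along a strictly increasing sequence of positive integers `n_k`, with `θ`
irrational, then `μ` is `β`-rigid for every `β` on the unit circle: there are nonzero
integers `m_j` with `∫ e^{−2πi m_j t} dμ(t) → β·μ([0,1])`. -/
theorem rigidity_from_irrational_limit (μ : Measure I) [IsFiniteMeasure μ]
    (n : ℕ → ℕ) (hmono : StrictMono n) (hpos : ∀ k, 0 < n k)
    (θ : ℝ) (hθ : Irrational θ)
    (hconv : TendstoInMeasure μ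
      (fun k (t : I) => Complex.exp (-(2 * Real.pi * Complex.I * (n k : ℂ) * ((t : ℝ) : ℂ))))
      atTop (fun _ => Complex.exp (2 * Real.pi * Complex.I * (θ : ℂ)))) :
    ∀ β : ℂ, ‖β‖ = 1 → ∃ m : ℕ → ℤ, (∀ j, m j ≠ 0) ∧
      Tendsto (fun j => ∫ t : I,
          Complex.exp (-(2 * Real.pi * Complex.I * (m j : ℂ) * ((t : ℝ) : ℂ))) ∂μ)
        atTop (𝓝 (β * ((μ Set.univ).toReal : ℂ))) :=
  rigidity_from_irrational_limit_general μ n hpos θ hθ hconv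
end
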